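/- arXiv:2404.09859 — 2 statements merged into one kernel-verified Lean document; each statement's English description precedes it below -/
import Mathlib

section
/- Let V = ℂ³ with Hermitian form ⟨x,y⟩ = -x₀ȳ₀ + x₁ȳ₁ + x₂ȳ₂. Let e₁, e₂, e₃ be an orthonormal basis with ⟨e₁,e₁⟩ = −1, ⟨e₂,e₂⟩ = ⟨e₃,e₃⟩ = 1, and let W = ℝe₁ ⊕ ℝe₂ ⊕ ℝe₃ (a real form defining a real plane). Let p = e₁ + βe₂ + γe₃ with β, γ ∈ ℂ and (Im β, Im γ) ≠ (0,0). Then there exist real numbers x, y, z, not all zero, with q = x e₁ + y e₂ + z e₃ satisfying ⟨q,p⟩ = 0 and ⟨q,q⟩ > 0. -/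
/-- The Hermitian form of signature `(-,+,+)` on `ℂ³`. -/
noncomputable def herm (x y : Fin 3 → ℂ) : ℂ :=
  -(x 0 * star (y 0)) + x 1 * star (y 1) + x 2 * star (y 2)

lemma herm_add_left (a b c : Fin 3 → ℂ) : herm (a + b) c = herm a c + herm b c := by
  simp [herm]; ring

lemma herm_add_right (a b c : Fin 3 → ℂ) : herm a (b + c) = herm a b + herm a c := by
  simp [herm]; ring

lemma herm_smul_left (t : ℂ) (a b : Fin 3 → ℂ) : herm (t • a) b = t * herm a b := by
  simp [herm]; ring

lemma herm_smul_right (t : ℂ) (a b : Fin 3 → ℂ) : herm a (t • b) = star t * herm a b := by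
  simp [herm]; ring

lemma herm_conj (a b : Fin 3 → ℂ) : herm a b = star (herm b a) := by
  simp only [herm, star_add, star_neg, star_mul', star_star]
  ring

theorem stmt_8 (e₁ e₂ e₃ : Fin 3 → ℂ)
    (h11 : herm e₁ e₁ = -1) (h22 : herm e₂ e₂ = 1) (h33 : herm e₃ e₃ = 1)
    (h12 : herm e₁ e₂ = 0) (h13 : herm e₁ e₃ = 0) (h23 : herm e₂ e₃ = 0)
    (β γ : ℂ) (him : β.im ≠ 0 ∨ γ.im ≠ 0)
    (p : Fin 3 → ℂ) (hp : p = e₁ + β • e₂ + γ • e₃)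
    (hneg : (herm p p).re < 0) :
    ∃ x y z : ℝ, ¬(x = 0 ∧ y = 0 ∧ z = 0) ∧
      herm ((x : ℂ) • e₁ + (y : ℂ) • e₂ + (z : ℂ) • e₃) p = 0 ∧
      0 < (herm ((x : ℂ) • e₁ + (y : ℂ) • e₂ + (z : ℂ) • e₃)
            ((x : ℂ) • e₁ + (y : ℂ) • e₂ + (z : ℂ) • e₃)).re := by
  have h21 : herm e₂ e₁ = 0 := by rw [herm_conj, h12]; simp
  have h31 : herm e₃ e₁ = 0 := by rw [herm_conj, h13]; simp
  have h32 : herm e₃ e₂ = 0 := by rw [herm_conj, h23]; simp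
  subst hp
  -- extract |β|² + |γ|² < 1 from hneg
  have hexp : herm (e₁ + β • e₂ + γ • e₃) (e₁ + β • e₂ + γ • e₃)
      = -1 + β * star β + γ * star γ := by
    simp only [herm_add_left, herm_add_right, herm_smul_left, herm_smul_right,
      h11, h22, h33, h12, h13, h23, h21, h31, h32]
    ring
  rw [hexp] at hneg
  have hlt : β.re ^ 2 + β.im ^ 2 + γ.re ^ 2 + γ.im ^ 2 < 1 := by
    simp [Complex.add_re, Complex.mul_re, Complex.mul_im] at hneg
    nlinarith [hneg]
  refine ⟨γ.im * β.re - β.im * γ.re, γ.im, -β.im, ?_, ?_, ?_⟩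
  · rintro ⟨-, hy, hz⟩
    rcases him with h | h
    · exact h (by linarith [neg_eq_zero.mp hz])
    · exact h hy
  · simp only [herm_add_left, herm_add_right, herm_smul_left, herm_smul_right,
      h11, h22, h33, h12, h13, h23, h21, h31, h32]
    rw [Complex.ext_iff]
    constructor <;>
      simp [Complex.mul_re, Complex.mul_im, Complex.ofReal_re, Complex.ofReal_im] <;> ring
  · simp only [herm_add_left, herm_add_right, herm_smul_left, herm_smul_right,
      h11, h22, h33, h12, h13, h23, h21, h31, h32]
    have hy2 : 0 < γ.im ^ 2 + β.im ^ 2 := by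
      rcases him with h | h
      · positivity
      · positivity
    simp [Complex.add_re, Complex.mul_re, Complex.ofReal_re, Complex.ofReal_im]
    nlinarith [sq_nonneg (γ.im * γ.re + β.im * β.re), hy2, hlt,
      sq_nonneg (γ.im * β.re - β.im * γ.re)]
end

section
/- Let V = ℂ³ with Hermitian form of signature (-,+,+) and let W ⊆ V be a real 2-dimensional subspace on which the form is real-valued with signature (-,+) (defining a geodesic G). Let u be a unit vector orthogonal to the complex span W + iW. Then for every nonzero x ∈ W and every unit complex number z, the real 3-dimensional subspace W + ℝ(z u) has real-valued Hermitian form of signature (-,+,+); i.e., every meridian of the bisector with real spine G is a real plane. -/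
/-!
The form is real on the real span of any family of pairwise orthogonal vectors: `herm` is
`ℝ`-bilinear, its values `herm x x` are real, and the off-diagonal values on the generators
vanish. Multiplying `u` by a unit scalar `z` keeps it a unit vector orthogonal to `w₁, w₂`,
so the generators `w₁, w₂, z • u` of a meridian are pairwise orthogonal.
-/

section herm

variable (x y y' : Fin 3 → ℂ)

lemma herm_add_left_s16 : herm (x + y) y' = herm x y' + herm y y' := by
  simp only [herm, Pi.add_apply]; ring

lemma herm_add_right_s16 : herm x (y + y') = herm x y + herm x y' := by
  simp only [herm, Pi.add_apply, star_add]; ring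

lemma herm_smul_left_s16 (c : ℂ) : herm (c • x) y = c * herm x y := by
  simp only [herm, Pi.smul_apply, smul_eq_mul]; ring

lemma herm_smul_right_s16 (c : ℂ) : herm x (c • y) = star c * herm x y := by
  simp only [herm, Pi.smul_apply, smul_eq_mul, star_mul']; ring

lemma herm_conj_symm : herm y x = star (herm x y) := by
  simp only [herm, star_add, star_neg, star_mul', star_star]; ring

lemma herm_self_im : (herm x x).im = 0 := by
  rw [← Complex.conj_eq_iff_im, ← Complex.star_def, ← herm_conj_symm]

lemma herm_eq_zero_comm : herm x y = 0 ↔ herm y x = 0 := by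
  rw [herm_conj_symm x y, star_eq_zero]

lemma herm_smul_smul_of_norm_eq_one {z : ℂ} (hz : ‖z‖ = 1) :
    herm (z • x) (z • y) = herm x y := by
  rw [herm_smul_left_s16, herm_smul_right_s16, ← mul_assoc, Complex.star_def, Complex.mul_conj,
    Complex.normSq_eq_norm_sq, hz]
  simp

end herm

noncomputable def hermIm : (Fin 3 → ℂ) →ₗ[ℝ] (Fin 3 → ℂ) →ₗ[ℝ] ℝ :=
  LinearMap.mk₂ ℝ (fun x y => (herm x y).im)
    (fun x x' y => by rw [herm_add_left_s16, Complex.add_im])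
    (fun r x y => by rw [← Complex.coe_smul, herm_smul_left_s16, smul_eq_mul, Complex.im_ofReal_mul])
    (fun x y y' => by rw [herm_add_right_s16, Complex.add_im])
    (fun r x y => by
      rw [← Complex.coe_smul, herm_smul_right_s16, Complex.star_def, Complex.conj_ofReal,
        smul_eq_mul, Complex.im_ofReal_mul])

lemma herm_im_eq_zero_of_mem_span {s : Set (Fin 3 → ℂ)}
    (hs : s.Pairwise fun x y => herm x y = 0) {x y : Fin 3 → ℂ}
    (hx : x ∈ Submodule.span ℝ s) (hy : y ∈ Submodule.span ℝ s) : (herm x y).im = 0 := by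
  have hgen : ∀ a ∈ s, ∀ b ∈ s, hermIm a b ∈ (⊥ : Submodule ℝ ℝ) := by
    intro a ha b hb
    obtain rfl | hab := eq_or_ne a b
    · exact herm_self_im a
    · simp [hermIm, hs ha hb hab]
  exact LinearMap.BilinMap.apply_apply_mem_of_mem_span ⊥ s s hermIm hgen x y hx hy

theorem stmt_16_general (w₁ w₂ u : Fin 3 → ℂ)
    (h12 : herm w₁ w₂ = 0)
    (huu : herm u u = 1) (hu1 : herm u w₁ = 0) (hu2 : herm u w₂ = 0)
    (z : ℂ) (hz : ‖z‖ = 1) :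
    (∀ v w : Fin 3 → ℂ,
      v ∈ Submodule.span ℝ ({w₁, w₂, z • u} : Set (Fin 3 → ℂ)) →
      w ∈ Submodule.span ℝ ({w₁, w₂, z • u} : Set (Fin 3 → ℂ)) →
      (herm v w).im = 0) ∧
    herm (z • u) (z • u) = 1 ∧ herm w₁ (z • u) = 0 ∧ herm w₂ (z • u) = 0 := by
  have h1z : herm w₁ (z • u) = 0 := by
    rw [herm_smul_right_s16, (herm_eq_zero_comm _ _).2 hu1, mul_zero]
  have h2z : herm w₂ (z • u) = 0 := by
    rw [herm_smul_right_s16, (herm_eq_zero_comm _ _).2 hu2, mul_zero]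
  have : Std.Symm fun x y : Fin 3 → ℂ => herm x y = 0 :=
    ⟨fun x y => (herm_eq_zero_comm x y).1⟩
  have hpairwise :
      ({w₁, w₂, z • u} : Set (Fin 3 → ℂ)).Pairwise fun x y => herm x y = 0 := by
    rw [Set.pairwise_insert_of_symm, Set.pairwise_pair_of_symm]
    simp only [Set.mem_insert_iff, Set.mem_singleton_iff, forall_eq_or_imp, forall_eq]
    exact ⟨fun _ => h2z, fun _ => h12, fun _ => h1z⟩
  refine ⟨fun v w hv hw => herm_im_eq_zero_of_mem_span hpairwise hv hw, ?_, h1z, h2z⟩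
  rw [herm_smul_smul_of_norm_eq_one u u hz, huu]

/-- Every meridian `W + ℝ(z u)` of a bisector is a real plane: the form is
real-valued on it, with signature `(-,+,+)`.  The real spine subspace `W` is
given by an orthonormal basis `w₁, w₂` with signs `-,+`, and `u` is a unit
vector orthogonal to `W + iW`. -/
theorem stmt_16 (w₁ w₂ u : Fin 3 → ℂ)
    (h11 : herm w₁ w₁ = -1) (h22 : herm w₂ w₂ = 1) (h12 : herm w₁ w₂ = 0)
    (huu : herm u u = 1) (hu1 : herm u w₁ = 0) (hu2 : herm u w₂ = 0)
    (z : ℂ) (hz : ‖z‖ = 1) :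
    (∀ v w : Fin 3 → ℂ,
      v ∈ Submodule.span ℝ ({w₁, w₂, z • u} : Set (Fin 3 → ℂ)) →
      w ∈ Submodule.span ℝ ({w₁, w₂, z • u} : Set (Fin 3 → ℂ)) →
      (herm v w).im = 0) ∧
    herm (z • u) (z • u) = 1 ∧ herm w₁ (z • u) = 0 ∧ herm w₂ (z • u) = 0 :=
  stmt_16_general w₁ w₂ u h12 huu hu1 hu2 z hz
end
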